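/- Let W, W' be closed subspaces of a Hilbert space H such that W ∩ W' has finite codimension in both W and W'. Then the orthogonal projection pr₊ : W → H⁺ is Fredholm if and only if pr₊ : W' → H⁺ is Fredholm, and pr₋ : W → (H⁺)^⊥ is compact if and only if pr₋ : W' → (H⁺)^⊥ is compact. Consequently W ∈ Gr⁺(H) iff W' ∈ Gr⁺(H). -/

import Mathlib

open Module Submodule

noncomputable section

variable {H : Type*} [NormedAddCommGroup H] [InnerProductSpace ℂ H] [CompleteSpace H]

def IsFredholm {E F : Type*} [NormedAddCommGroup E] [InnerProductSpace ℂ E]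
    [NormedAddCommGroup F] [InnerProductSpace ℂ F] (T : E →L[ℂ] F) : Prop :=
  FiniteDimensional ℂ (LinearMap.ker (T : E →ₗ[ℂ] F)) ∧
  FiniteDimensional ℂ (F ⧸ LinearMap.range (T : E →ₗ[ℂ] F)) ∧
  IsClosed (LinearMap.range (T : E →ₗ[ℂ] F) : Set F)

def InGr (Hp : Submodule ℂ H) [HasOrthogonalProjection Hp] (W : Submodule ℂ H) : Prop :=
  IsClosed (W : Set H) ∧
  IsFredholm ((orthogonalProjection Hp).comp W.subtypeL) ∧
  IsCompactOperator ((orthogonalProjection Hpᗮ).comp W.subtypeL)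

/-!
Let `T` be a bounded operator and `V ≤ W` closed subspaces with `W / V` finite-dimensional.
Restricting `T` from `W` to `V` only changes finite-dimensional data: `ker T|_V = V ∩ ker T|_W`
has finite codimension in `ker T|_W`, and `T(V)` has finite codimension in `T(W)`, since
`T(W) / T(V)` is a quotient of `W / V`. So `T|_W` and `T|_V` have finite-dimensional kernel and
cokernel together; on a Hilbert space the closed range comes for free, as `T` restricted to
`(ker T)ᗮ` is injective with the same range and the open mapping theorem applies. Likewise
`T|_W = T|_V ∘ P_V + (a finite-rank operator)`, so `T|_W` is compact iff `T|_V` is. Applying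
both facts to `V = W ∩ W'` inside `W` and inside `W'` gives the theorem.
-/

open LinearMap

section FiniteCodimension

variable {R M N : Type*} [Ring R] [AddCommGroup M] [Module R M] [AddCommGroup N] [Module R N]
  {V W : Submodule R M}

theorem Submodule.fg_map_of_cofg_comap_subtype {P : Type*} [AddCommGroup P] [Module R P]
    (hV : (V.comap W.subtype).CoFG) (g : M →ₗ[R] P) (hg : V ≤ ker g) : (W.map g).FG := by
  rw [← range_domRestrict, range_fg_iff_ker_cofg, ker_domRestrict]
  exact hV.of_le (comap_mono hg)

theorem LinearMap.cofg_range_comp_subtype_iff (hVW : V ≤ W) (hV : (V.comap W.subtype).CoFG)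
    (f : M →ₗ[R] N) :
    (range (f ∘ₗ W.subtype)).CoFG ↔ (range (f ∘ₗ V.subtype)).CoFG := by
  simp only [range_comp, range_subtype]
  refine ⟨fun hW => ?_, fun hV' => hV'.of_le (map_mono hVW)⟩
  have : Module.Finite R ((W.map f).map (V.map f).mkQ) := by
    rw [Module.Finite.iff_fg, ← map_comp]
    exact fg_map_of_cofg_comap_subtype hV _ fun v hv =>
      (Submodule.Quotient.mk_eq_zero _).2 (mem_map_of_mem hv)
  have : Module.Finite R ((N ⧸ V.map f) ⧸ (W.map f).map (V.map f).mkQ) :=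
    Module.Finite.equiv (quotientQuotientEquivQuotient _ _ (map_mono hVW)).symm
  exact Module.Finite.of_submodule_quotient ((W.map f).map (V.map f).mkQ)

theorem Submodule.fg_inf_ker_iff [IsNoetherianRing R] (hVW : V ≤ W)
    (hV : (V.comap W.subtype).CoFG) (f : M →ₗ[R] N) :
    (W ⊓ ker f).FG ↔ (V ⊓ ker f).FG := by
  refine ⟨fun hW => hW.of_le (inf_le_inf_right _ hVW), fun hV' => ?_⟩
  refine fg_of_fg_map_of_fg_inf_ker V.mkQ ?_ ?_
  · exact (fg_map_of_cofg_comap_subtype hV V.mkQ (ker_mkQ V).ge).of_le (map_mono inf_le_left)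
  · rwa [ker_mkQ, inf_right_comm, inf_eq_right.2 hVW]

theorem LinearMap.finite_ker_comp_subtype_iff (f : M →ₗ[R] N) (W : Submodule R M) :
    Module.Finite R (ker (f ∘ₗ W.subtype)) ↔ (W ⊓ ker f).FG := by
  rw [Module.Finite.iff_fg, ker_comp, ← fg_map_iff W.subtype W.injective_subtype,
    map_comap_subtype]

end FiniteCodimension

theorem ContinuousLinearMap.isClosed_range_of_cofg {𝕜 E F : Type*} [RCLike 𝕜]
    [NormedAddCommGroup E] [InnerProductSpace 𝕜 E] [CompleteSpace E]
    [NormedAddCommGroup F] [NormedSpace 𝕜 F] [CompleteSpace F]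
    (T : E →L[𝕜] F) (h : (range (T : E →ₗ[𝕜] F)).CoFG) :
    IsClosed (range (T : E →ₗ[𝕜] F) : Set F) := by
  set K := (ker (T : E →ₗ[𝕜] F))ᗮ
  have : CompleteSpace K := (ker (T : E →ₗ[𝕜] F)).isClosed_orthogonal.completeSpace_coe
  have hrange : range (T.comp K.subtypeL : K →ₗ[𝕜] F) = range (T : E →ₗ[𝕜] F) := by
    rw [toLinearMap_comp, toLinearMap_subtypeL, range_comp, range_subtype,
      ← Submodule.map_top]
    refine le_antisymm (map_mono le_top) ((LinearMap.map_le_map_iff _).2 ?_)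
    rw [sup_comm, sup_orthogonal_of_hasOrthogonalProjection]
  have hker : ker (T.comp K.subtypeL : K →ₗ[𝕜] F) = ⊥ :=
    ker_eq_bot.2 (injective_domRestrict_iff.2 (orthogonal_disjoint _).symm)
  obtain ⟨G, hG⟩ := (range (T : E →ₗ[𝕜] F)).exists_isCompl
  have : FiniteDimensional 𝕜 G := (quotientEquivOfIsCompl _ G hG).finiteDimensional
  rw [← hrange] at hG ⊢
  exact (T.comp K.subtypeL).closed_complemented_range_of_isCompl_of_ker_eq_bot G hG
    G.closed_of_finiteDimensional hker

theorem ContinuousLinearMap.isCompactOperator_of_finiteDimensional_range {𝕜 X Y : Type*}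
    [NontriviallyNormedField 𝕜] [ProperSpace 𝕜]
    [NormedAddCommGroup X] [NormedSpace 𝕜 X] [NormedAddCommGroup Y] [NormedSpace 𝕜 Y]
    (T : X →L[𝕜] Y) [FiniteDimensional 𝕜 (range (T : X →ₗ[𝕜] Y))] : IsCompactOperator T := by
  have : ProperSpace (range (T : X →ₗ[𝕜] Y)) := FiniteDimensional.proper 𝕜 _
  exact (isCompactOperator_of_locallyCompactSpace_dom T.rangeRestrict).clm_comp (range _).subtypeL

theorem ContinuousLinearMap.isCompactOperator_comp_subtypeL_iff {𝕜 E Y : Type*} [RCLike 𝕜]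
    [NormedAddCommGroup E] [InnerProductSpace 𝕜 E] [CompleteSpace E]
    [NormedAddCommGroup Y] [NormedSpace 𝕜 Y] (T : E →L[𝕜] Y) {V W : Submodule 𝕜 E}
    (hV : IsClosed (V : Set E)) (hVW : V ≤ W) (hcod : (V.comap W.subtype).CoFG) :
    IsCompactOperator (T.comp W.subtypeL) ↔ IsCompactOperator (T.comp V.subtypeL) := by
  have : CompleteSpace V := hV.completeSpace_coe
  set P := V.orthogonalProjectionOnto.comp W.subtypeL
  set D := T.comp W.subtypeL - (T.comp V.subtypeL).comp P
  refine ⟨fun h => h.comp_clm (V.subtypeL.codRestrict W fun v => hVW v.2), fun h => ?_⟩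
  have : FiniteDimensional 𝕜 (range (D : W →ₗ[𝕜] Y)) := by
    refine Module.Finite.iff_fg.2 (range_fg_iff_ker_cofg.2 (hcod.of_le ?_))
    intro w hw
    have hPw : V.starProjection w = w := starProjection_eq_self_iff.2 hw
    simp [D, P, hPw]
  rw [show T.comp W.subtypeL = (T.comp V.subtypeL).comp P + D by simp only [D, add_sub_cancel],
    FunLike.coe_add]
  exact (h.comp_clm P).add D.isCompactOperator_of_finiteDimensional_range

section Fredholm

variable {E F : Type*} [NormedAddCommGroup E] [InnerProductSpace ℂ E] [CompleteSpace E]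
  [NormedAddCommGroup F] [InnerProductSpace ℂ F] [CompleteSpace F]

theorem isFredholm_iff_finiteDimensional_ker_coker (T : E →L[ℂ] F) :
    IsFredholm T ↔ FiniteDimensional ℂ (ker (T : E →ₗ[ℂ] F)) ∧
      FiniteDimensional ℂ (F ⧸ range (T : E →ₗ[ℂ] F)) :=
  ⟨fun h => ⟨h.1, h.2.1⟩, fun h => ⟨h.1, h.2, T.isClosed_range_of_cofg h.2⟩⟩

theorem isFredholm_comp_subtypeL_iff (T : E →L[ℂ] F) {V W : Submodule ℂ E}
    (hV : IsClosed (V : Set E)) (hW : IsClosed (W : Set E)) (hVW : V ≤ W)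
    (hcod : (V.comap W.subtype).CoFG) :
    IsFredholm (T.comp W.subtypeL) ↔ IsFredholm (T.comp V.subtypeL) := by
  have := hV.completeSpace_coe
  have := hW.completeSpace_coe
  rw [isFredholm_iff_finiteDimensional_ker_coker, isFredholm_iff_finiteDimensional_ker_coker]
  exact and_congr ((finite_ker_comp_subtype_iff _ W).trans <|
      (fg_inf_ker_iff hVW hcod _).trans (finite_ker_comp_subtype_iff _ V).symm)
    (cofg_range_comp_subtype_iff hVW hcod _)

end Fredholm

/-- If `W ∩ W'` has finite codimension in both `W` and `W'`, then the Fredholm and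
compactness conditions defining the Sato Grassmannian hold for `W` iff they hold
for `W'`; consequently `W ∈ Gr⁺(H)` iff `W' ∈ Gr⁺(H)`. -/
theorem commensurable_grassmannian (Hp : Submodule ℂ H) [HasOrthogonalProjection Hp]
    (W W' : Submodule ℂ H)
    (hWc : IsClosed (W : Set H)) (hW'c : IsClosed (W' : Set H))
    (hfin : FiniteDimensional ℂ (↥W ⧸ (W ⊓ W').comap W.subtype))
    (hfin' : FiniteDimensional ℂ (↥W' ⧸ (W ⊓ W').comap W'.subtype)) :
    (IsFredholm ((orthogonalProjection Hp).comp W.subtypeL) ↔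
      IsFredholm ((orthogonalProjection Hp).comp W'.subtypeL)) ∧
    (IsCompactOperator ((orthogonalProjection Hpᗮ).comp W.subtypeL) ↔
      IsCompactOperator ((orthogonalProjection Hpᗮ).comp W'.subtypeL)) ∧
    (InGr Hp W ↔ InGr Hp W') := by
  have hHp : IsClosed (Hp : Set H) := Hp.orthogonal_orthogonal ▸ Hpᗮ.isClosed_orthogonal
  have := hHp.completeSpace_coe
  have hV : IsClosed ((W ⊓ W' : Submodule ℂ H) : Set H) := hWc.inter hW'c
  have fredholm := (isFredholm_comp_subtypeL_iff Hp.orthogonalProjectionOnto hV hWc inf_le_left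
    hfin).trans (isFredholm_comp_subtypeL_iff _ hV hW'c inf_le_right hfin').symm
  have compact := (Hpᗮ.orthogonalProjectionOnto.isCompactOperator_comp_subtypeL_iff hV
    inf_le_left hfin).trans
    (Hpᗮ.orthogonalProjectionOnto.isCompactOperator_comp_subtypeL_iff hV inf_le_right hfin').symm
  exact ⟨fredholm, compact, and_congr (iff_of_true hWc hW'c) (and_congr fredholm compact)⟩
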